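/- For every natural number N ≥ 1 and every n ≥ 1, every n-admissible path in the FIFO transition system contains at most 2n ticks. -/

import Mathlib

/-- Labels of steps in the FIFO transition system. -/
inductive FLabel : Type
  | tick | ins | outs
deriving DecidableEq

/-- States of the FIFO transition system: a fill level `i ∈ {0, …, N+2}` together
with an urgency flag (`true` = urgent, `false` = relaxed). -/
abbrev FState : Type := ℕ × Bool

/-- Steps of the FIFO transition system (for the buffer of capacity `N + 2`). -/
inductive FStep (N : ℕ) : FState → FLabel → FState → Prop
  | tick (i : ℕ) : FStep N (i, false) FLabel.tick (i, true)
  | ins (i : ℕ) (u : Bool) (h : i < N + 2) : FStep N (i, u) FLabel.ins (i + 1, false)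
  | outs (i : ℕ) (u : Bool) (h : 0 < i) : FStep N (i, u) FLabel.outs (i - 1, false)

/-- `FPath N s ls` : `ls` is the sequence of labels of a finite path of consecutive
steps starting in state `s`. -/
inductive FPath (N : ℕ) : FState → List FLabel → Prop
  | nil (s : FState) : FPath N s []
  | cons {s s' : FState} {l : FLabel} {ls : List FLabel} :
      FStep N s l s' → FPath N s' ls → FPath N s (l :: ls)

/-- A path of the FIFO system: a path starting in the initial state `(0, relaxed)`. -/
def FifoPath (N : ℕ) (ls : List FLabel) : Prop := FPath N (0, false) ls

/-- An `n`-admissible path of the FIFO system: at most `n` `in`-steps and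
at most `n - 1` `out`-steps. -/
def FifoAdmissible (N n : ℕ) (ls : List FLabel) : Prop :=
  FifoPath N ls ∧ ls.count FLabel.ins ≤ n ∧ ls.count FLabel.outs ≤ n - 1

/-- The response performance of the FIFO buffer: the supremum (in `ℕ∞`) of the
number of ticks over all `n`-admissible paths. -/
noncomputable def rpFifo (N n : ℕ) : ℕ∞ :=
  sSup {k : ℕ∞ | ∃ ls : List FLabel, FifoAdmissible N n ls ∧ (ls.count FLabel.tick : ℕ∞) = k}

/-- No two ticks are adjacent on a path, since a tick leads to an urgent state, which cannot
tick; the urgency term makes this invariant inductive. -/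
theorem FPath.count_tick_add_toNat_le {N : ℕ} {s : FState} {ls : List FLabel}
    (hp : FPath N s ls) :
    ls.count FLabel.tick + s.2.toNat ≤ ls.count FLabel.ins + ls.count FLabel.outs + 1 := by
  induction hp with
  | nil => simp [Bool.toNat_le]
  | cons hstep _ ih =>
    cases hstep with
    | tick => simp_all
    | ins _ u _ | outs _ u _ =>
      have := Bool.toNat_le u
      simp only [List.count_cons, beq_iff_eq, reduceCtorEq, if_false, if_true,
        Bool.toNat_false] at ih ⊢
      omega

theorem fifo_ticks_le_general (N n : ℕ) (hn : 1 ≤ n) (ls : List FLabel)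
    (h : FifoAdmissible N n ls) : ls.count FLabel.tick ≤ 2 * n := by
  obtain ⟨hpath, hins, houts⟩ := h
  have := FPath.count_tick_add_toNat_le hpath
  simp only [Bool.toNat_false, add_zero] at this
  omega

/-- For every `N ≥ 1` and `n ≥ 1`, every `n`-admissible path in the FIFO transition
system contains at most `2n` ticks. -/
theorem fifo_ticks_le (N n : ℕ) (hN : 1 ≤ N) (hn : 1 ≤ n) (ls : List FLabel)
    (h : FifoAdmissible N n ls) : ls.count FLabel.tick ≤ 2 * n :=
  fifo_ticks_le_general N n hn ls h
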